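/- arXiv:2103.12852 — 3 statements merged into one kernel-verified Lean document; each statement's English description precedes it below -/
import Mathlib

section
/- For every positive integer n, the sum over k from 0 to 2(2^n - 1) of a(n,k)^3 equals 3·7^(n-1). -/
open Polynomial Finset

/-- `sternA n k` is the coefficient of `x^k` in `∏_{i=0}^{n-1} (1 + x^(2^i) + x^(2·2^i))`,
the `k`-th entry of the `n`-th row of Stern's diatomic array. -/
noncomputable def sternA (n k : ℕ) : ℕ :=
  (∏ i ∈ Finset.range n, ((1 : Polynomial ℕ) + X ^ (2 ^ i) + X ^ (2 * 2 ^ i))).coeff k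

namespace SternAux

noncomputable def P (n : ℕ) : Polynomial ℕ :=
  ∏ i ∈ Finset.range n, ((1 : Polynomial ℕ) + X ^ (2 ^ i) + X ^ (2 * 2 ^ i))

lemma sternA_eq (n k : ℕ) : sternA n k = (P n).coeff k := rfl

lemma P_succ (n : ℕ) :
    P (n+1) = ((1:Polynomial ℕ) + X + X^2) * Polynomial.expand ℕ 2 (P n) := by
  rw [P, Finset.prod_range_succ']
  have h1 : ((1:Polynomial ℕ) + X ^ (2 ^ 0) + X ^ (2 * 2 ^ 0)) = 1 + X + X^2 := by norm_num
  rw [h1, mul_comm]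
  congr 1
  rw [P, map_prod]
  apply Finset.prod_congr rfl
  intro i _
  rw [map_add, map_add, map_one, map_pow, map_pow, expand_X, ← pow_mul, ← pow_mul]
  ring_nf

lemma coeff_succ (n m : ℕ) : sternA (n+1) m =
    (Polynomial.expand ℕ 2 (P n)).coeff m
  + (if 1 ≤ m then (Polynomial.expand ℕ 2 (P n)).coeff (m-1) else 0)
  + (if 2 ≤ m then (Polynomial.expand ℕ 2 (P n)).coeff (m-2) else 0) := by
  rw [sternA_eq, P_succ]
  have h : ((1:Polynomial ℕ) + X + X^2) * Polynomial.expand ℕ 2 (P n)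
      = Polynomial.expand ℕ 2 (P n) * X ^ 0 + Polynomial.expand ℕ 2 (P n) * X ^ 1
        + Polynomial.expand ℕ 2 (P n) * X ^ 2 := by ring
  rw [h, coeff_add, coeff_add, coeff_mul_X_pow', coeff_mul_X_pow', coeff_mul_X_pow']
  simp

lemma ceff (n m : ℕ) : (Polynomial.expand ℕ 2 (P n)).coeff m
    = if 2 ∣ m then sternA n (m/2) else 0 := by
  rw [Polynomial.coeff_expand (by norm_num), sternA_eq]

lemma aodd (n k : ℕ) : sternA (n+1) (2*k+1) = sternA n k := by
  rw [coeff_succ, ceff, ceff, ceff]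
  rcases k with _ | j
  · norm_num
  · have h1 : 2*(j+1)+1-1 = 2*(j+1) := rfl
    have h2 : 2*(j+1)+1-2 = 2*j+1 := by omega
    rw [h1, h2]
    have hx : ¬ (2 ∣ 2*(j+1)+1) := by omega
    rw [if_neg hx]
    have hy : ¬ (2 ∣ 2*j+1) := by omega
    simp [hy, Nat.mul_div_cancel_left]

lemma aeven (n k : ℕ) : sternA (n+1) (2*k+2) = sternA n (k+1) + sternA n k := by
  rw [coeff_succ, ceff, ceff, ceff]
  have h1 : 2*k+2-1 = 2*k+1 := rfl
  have h2 : 2*k+2-2 = 2*k := by omega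
  rw [h1, h2]
  have hd : (2*k+2)/2 = k+1 := by omega
  have hd2 : (2*k)/2 = k := by omega
  have hn1 : ¬ (2 ∣ 2*k+1) := by omega
  simp [hn1, hd, hd2, show 2 ∣ 2*k+2 by omega, show 2 ∣ 2*k from ⟨k, rfl⟩]

lemma azero (n : ℕ) : sternA n 0 = 1 := by
  induction n with
  | zero => simp [sternA]
  | succ n ih => rw [coeff_succ, ceff]; simpa using ih

noncomputable def pre (n : ℕ) : ℕ → ℕ
  | 0 => 0
  | k+1 => sternA n k

lemma heven (n j : ℕ) : sternA (n+1) (2*j) = sternA n j + pre n j := by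
  cases j with
  | zero => simp [pre, azero]
  | succ i =>
    have h : 2*(i+1) = 2*i+2 := by ring
    rw [h, aeven]; rfl

lemma geom2 (n : ℕ) : ∑ i ∈ Finset.range n, (2 * 2^i) = 2 * (2^n - 1) := by
  induction n with
  | zero => simp
  | succ n ih =>
    rw [Finset.sum_range_succ, ih]
    have h1 := Nat.one_le_two_pow (n := n)
    have h2 : (2:ℕ)^(n+1) = 2 * 2^n := by ring
    omega

lemma natDegree_P (n : ℕ) : (P n).natDegree ≤ 2 * (2^n - 1) := by
  rw [← geom2]
  refine le_trans (Polynomial.natDegree_prod_le _ _) (Finset.sum_le_sum ?_)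
  intro i _
  refine le_trans (Polynomial.natDegree_add_le _ _) ?_
  simp only [Polynomial.natDegree_X_pow]
  refine max_le (le_trans (Polynomial.natDegree_add_le _ _) ?_) le_rfl
  simp [Polynomial.natDegree_X_pow]

lemma vanish {n k : ℕ} (h : 2 * (2^n - 1) < k) : sternA n k = 0 := by
  rw [sternA_eq]
  exact Polynomial.coeff_eq_zero_of_natDegree_lt (lt_of_le_of_lt (natDegree_P n) h)

lemma sum_range_two_mul (m : ℕ) (f : ℕ → ℕ) :
    ∑ i ∈ Finset.range (2*m), f i = ∑ j ∈ Finset.range m, (f (2*j) + f (2*j+1)) := by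
  induction m with
  | zero => simp
  | succ m ih =>
    have h : 2 * (m+1) = (2*m + 1) + 1 := by ring
    rw [h, Finset.sum_range_succ, Finset.sum_range_succ, ih, Finset.sum_range_succ]
    ring

noncomputable def S (n : ℕ) : ℕ := ∑ k ∈ Finset.range (2^(n+1)), sternA n k ^ 3

noncomputable def W (n : ℕ) : ℕ :=
  ∑ k ∈ Finset.range (2^(n+1)),
    sternA n k * sternA n (k+1) * (sternA n k + sternA n (k+1))

section claims
variable (n : ℕ)

lemma hM' : (2:ℕ)^(n+1) = (2^(n+1) - 1) + 1 := by
  have := Nat.one_le_two_pow (n := n+1); omega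

lemma hg1 : sternA n (2^(n+1) - 1) = 0 := by
  apply vanish
  have h1 := Nat.one_le_two_pow (n := n)
  have h2 : (2:ℕ)^(n+1) = 2 * 2^n := by ring
  omega

lemma hg2 : sternA n (2^(n+1) - 1 + 1) = 0 := by
  apply vanish
  have h1 := Nat.one_le_two_pow (n := n)
  have h2 : (2:ℕ)^(n+1) = 2 * 2^n := by ring
  omega

lemma claim1 : ∑ j ∈ Finset.range (2^(n+1)), (pre n j)^3 = S n := by
  rw [S, hM' n, Finset.sum_range_succ', Finset.sum_range_succ]
  simp [pre, hg1]

lemma claim2 : ∑ j ∈ Finset.range (2^(n+1)), (sternA n j)^2 * pre n j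
    = ∑ j ∈ Finset.range (2^(n+1)), sternA n j * (sternA n (j+1))^2 := by
  rw [hM' n, Finset.sum_range_succ', Finset.sum_range_succ, hg1]
  simp only [pre, mul_zero, zero_mul, add_zero]
  exact Finset.sum_congr rfl (fun j _ => by ring)

lemma claim3 : ∑ j ∈ Finset.range (2^(n+1)), sternA n j * (pre n j)^2
    = ∑ j ∈ Finset.range (2^(n+1)), (sternA n j)^2 * sternA n (j+1) := by
  rw [hM' n, Finset.sum_range_succ', Finset.sum_range_succ, hg2]
  simp only [pre, mul_zero, zero_mul, add_zero, ne_eq, OfNat.ofNat_ne_zero,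
    not_false_eq_true, zero_pow]
  exact Finset.sum_congr rfl (fun j _ => by ring)

lemma claimW : W n = ∑ j ∈ Finset.range (2^(n+1)), (sternA n j)^2 * sternA n (j+1)
    + ∑ j ∈ Finset.range (2^(n+1)), sternA n j * (sternA n (j+1))^2 := by
  rw [W, ← Finset.sum_add_distrib]
  exact Finset.sum_congr rfl (fun j _ => by ring)

end claims

lemma S_succ (n : ℕ) : S (n+1) = 3 * S n + 3 * W n := by
  have h2 : (2:ℕ)^(n+1+1) = 2 * 2^(n+1) := by ring
  rw [S, h2, sum_range_two_mul]
  have hpt : ∀ j, sternA (n+1) (2*j) ^3 + sternA (n+1) (2*j+1) ^3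
      = 2 * sternA n j^3 + 3 * ((sternA n j)^2 * pre n j)
        + 3 * (sternA n j * (pre n j)^2) + (pre n j)^3 := by
    intro j; rw [heven, aodd]; ring
  rw [Finset.sum_congr rfl (fun j _ => hpt j)]
  rw [Finset.sum_add_distrib, Finset.sum_add_distrib, Finset.sum_add_distrib,
    ← Finset.mul_sum, ← Finset.mul_sum, ← Finset.mul_sum]
  rw [claim1, claim2, claim3, claimW]
  rw [S]
  ring

lemma W_succ (n : ℕ) : W (n+1) = 4 * S n + 4 * W n := by
  have h2 : (2:ℕ)^(n+1+1) = 2 * 2^(n+1) := by ring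
  rw [W, h2, sum_range_two_mul]
  have hpt : ∀ j,
      (sternA (n+1) (2*j) * sternA (n+1) (2*j+1) * (sternA (n+1) (2*j) + sternA (n+1) (2*j+1))
      + sternA (n+1) (2*j+1) * sternA (n+1) (2*j+1+1)
        * (sternA (n+1) (2*j+1) + sternA (n+1) (2*j+1+1)))
      = 4 * sternA n j^3 + 3 * ((sternA n j)^2 * pre n j) + sternA n j * (pre n j)^2
        + 3 * ((sternA n j)^2 * sternA n (j+1)) + sternA n j * (sternA n (j+1))^2 := by
    intro j
    have e : 2*j+1+1 = 2*j+2 := by omega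
    rw [e, heven, aodd, aeven]
    ring
  rw [Finset.sum_congr rfl (fun j _ => hpt j)]
  rw [Finset.sum_add_distrib, Finset.sum_add_distrib, Finset.sum_add_distrib,
    Finset.sum_add_distrib, ← Finset.mul_sum, ← Finset.mul_sum, ← Finset.mul_sum]
  rw [claim2, claim3, claimW]
  rw [S]
  ring

lemma S_zero : S 0 = 1 := by
  rw [S]
  norm_num [Finset.sum_range_succ, sternA, Polynomial.coeff_one]

lemma W_zero : W 0 = 0 := by
  rw [W]
  norm_num [Finset.sum_range_succ, sternA, Polynomial.coeff_one]

lemma SW (m : ℕ) : S (m+1) = 3 * 7^m ∧ W (m+1) = 4 * 7^m := by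
  induction m with
  | zero =>
    constructor
    · rw [S_succ, S_zero, W_zero]; norm_num
    · rw [W_succ, S_zero, W_zero]; norm_num
  | succ m ih =>
    obtain ⟨hS, hW⟩ := ih
    constructor
    · rw [S_succ, hS, hW]; ring
    · rw [W_succ, hS, hW]; ring

end SternAux

open SternAux in
/-- The sum of the cubes of the `n`-th row of Stern's diatomic array is `3 · 7^(n-1)`. -/
theorem sum_cubes_stern (n : ℕ) (hn : 0 < n) :
    ∑ k ∈ Finset.range (2 * (2 ^ n - 1) + 1), (sternA n k) ^ 3 = 3 * 7 ^ (n - 1) := by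
  obtain ⟨m, rfl⟩ : ∃ m, n = m + 1 := ⟨n - 1, by omega⟩
  have hS := (SW m).1
  have key : S (m+1) = ∑ k ∈ Finset.range (2 * (2 ^ (m+1) - 1) + 1), (sternA (m+1) k) ^ 3 := by
    have h1 := Nat.one_le_two_pow (n := m+1)
    have h2 : (2:ℕ)^(m+1+1) = 2 * 2^(m+1) := by ring
    have h3 : (2:ℕ)^(m+1+1) = (2 * (2^(m+1) - 1) + 1) + 1 := by omega
    rw [S, h3, Finset.sum_range_succ]
    have hz : sternA (m+1) (2 * (2^(m+1) - 1) + 1) = 0 := vanish (by omega)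
    rw [hz]
    simp
  rw [← key, hS]
  simp
end

section
/- For every positive integer n, there exists a bijection between the set 𝒜_3(n) of 3×n matrices with entries in {0,1,2} all of whose rows have the same valuation, and the set 𝒮(n) of words of length n over the alphabet {1,2,3,4,5,6,7} whose last letter lies in {1,2,3}. -/
/-!
Record a `3 × n` matrix `M` by the offsets of its row valuations,
`v(M₀) - v(M₁) = s · 2ⁿ` and `v(M₀) - v(M₂) = t · 2ⁿ`. Removing the last column `d` turns
the offsets `(s, t)` into `(2s - d₀ + d₁, 2t - d₀ + d₂)`, so the numbers of matrices with
given offsets evolve under a linear transfer operator. Offsets outside `{-1, 0, 1}²` never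
occur; the operator sends the indicator of `(0, 0)` to `weight`, and `weight` is an
eigenvector with eigenvalue `7`. Hence `3 · 7^(n-1)` matrices have rows of equal valuation,
exactly as many as there are words in `𝒮(n)`, and finite sets of equal size are in bijection.
-/

open Finset

/-- The valuation of a vector `a ∈ {0,1,2}^n`: `v(a) = ∑_{i=1}^n a_i · 2^(i-1)`. -/
def valu {n : ℕ} (a : Fin n → Fin 3) : ℕ :=
  ∑ i : Fin n, (a i : ℕ) * 2 ^ (i : ℕ)

lemma valu_snoc {n : ℕ} (a : Fin n → Fin 3) (d : Fin 3) :
    valu (Fin.snoc a d) = valu a + (d : ℕ) * 2 ^ n := by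
  simp [valu, Fin.sum_univ_castSucc]

def Matrix.snocColEquiv (ι α : Type*) (n : ℕ) :
    (ι → α) × Matrix ι (Fin n) α ≃ Matrix ι (Fin (n + 1)) α :=
  (Equiv.arrowProdEquivProdArrow ι _ _).symm.trans
    (Equiv.piCongrRight fun _ => Fin.snocEquiv fun _ => α)

@[simp]
lemma Matrix.snocColEquiv_apply {ι α : Type*} {n : ℕ} (d : ι → α) (M : Matrix ι (Fin n) α)
    (i : ι) :
    Matrix.snocColEquiv ι α n (d, M) i = Fin.snoc (M i) (d i) := rfl

namespace ValuationRows

def rowOffsetCount (n : ℕ) (s t : ℤ) : ℕ :=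
  #{M : Matrix (Fin 3) (Fin n) (Fin 3) |
    (valu (M 0) : ℤ) - valu (M 1) = s * 2 ^ n ∧ (valu (M 0) : ℤ) - valu (M 2) = t * 2 ^ n}

def transfer (f : ℤ → ℤ → ℕ) (s t : ℤ) : ℕ :=
  ∑ d : Fin 3 → Fin 3, f (2 * s - d 0 + d 1) (2 * t - d 0 + d 2)

lemma rowOffsetCount_zero (s t : ℤ) :
    rowOffsetCount 0 s t = if s = 0 ∧ t = 0 then 1 else 0 := by
  have hcard : Fintype.card (Matrix (Fin 3) (Fin 0) (Fin 3)) = 1 := rfl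
  simp [rowOffsetCount, valu, eq_comm (a := (0 : ℤ)), apply_ite, hcard]

lemma rowOffsetCount_succ (n : ℕ) : rowOffsetCount (n + 1) = transfer (rowOffsetCount n) := by
  ext s t
  simp only [rowOffsetCount, transfer, card_filter]
  rw [← (Matrix.snocColEquiv _ _ n).sum_comp, Fintype.sum_prod_type]
  refine sum_congr rfl fun d _ => sum_congr rfl fun M _ => ?_
  simp only [Matrix.snocColEquiv_apply, valu_snoc, pow_succ]
  push_cast
  refine if_congr ?_ rfl rfl
  constructor <;> rintro ⟨h₁, h₂⟩ <;> exact ⟨by linear_combination h₁, by linear_combination h₂⟩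

def weight (s t : ℤ) : ℕ :=
  if s = 0 ∧ t = 0 then 3
  else if (s, t) ∈ ({(1, 0), (-1, 0), (0, 1), (0, -1), (1, 1), (-1, -1)} : Finset (ℤ × ℤ)) then 1
  else 0

lemma weight_eq_zero {s t : ℤ} (h : ¬(|s| ≤ 1 ∧ |t| ≤ 1)) : weight s t = 0 := by
  simp only [abs_le] at h
  unfold weight
  split_ifs with h₀ h₁
  · omega
  · simp only [mem_insert, mem_singleton, Prod.mk.injEq] at h₁
    omega
  · rfl

lemma transfer_apply_eq_zero {f : ℤ → ℤ → ℕ} (hf : ∀ s t, ¬(|s| ≤ 1 ∧ |t| ≤ 1) → f s t = 0)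
    {s t : ℤ} (h : ¬(|s| ≤ 1 ∧ |t| ≤ 1)) : transfer f s t = 0 := by
  refine sum_eq_zero fun d _ => hf _ _ ?_
  have := fun i => (d i).is_le
  simp only [abs_le] at h ⊢
  omega

lemma transfer_smul (c : ℕ) (f : ℤ → ℤ → ℕ) : transfer (c • f) = c • transfer f := by
  ext s t
  simp [transfer, mul_sum]

lemma rowOffsetCount_one : rowOffsetCount 1 = weight := by
  ext s t
  rw [rowOffsetCount_succ]
  by_cases h : |s| ≤ 1 ∧ |t| ≤ 1
  · obtain ⟨⟨hs₁, hs₂⟩, ht₁, ht₂⟩ := And.imp abs_le.1 abs_le.1 h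
    interval_cases s <;> interval_cases t <;> decide
  · refine (transfer_apply_eq_zero (fun s t hst => ?_) h).trans (weight_eq_zero h).symm
    rw [rowOffsetCount_zero, if_neg]
    rintro ⟨rfl, rfl⟩
    simp at hst

lemma transfer_weight : transfer weight = 7 • weight := by
  ext s t
  by_cases h : |s| ≤ 1 ∧ |t| ≤ 1
  · obtain ⟨⟨hs₁, hs₂⟩, ht₁, ht₂⟩ := And.imp abs_le.1 abs_le.1 h
    interval_cases s <;> interval_cases t <;> decide
  · rw [Pi.smul_apply, Pi.smul_apply, weight_eq_zero h,
      transfer_apply_eq_zero (fun _ _ => weight_eq_zero) h, smul_zero]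

lemma rowOffsetCount_succ_eq (n : ℕ) : rowOffsetCount (n + 1) = 7 ^ n • weight := by
  induction n with
  | zero => rw [pow_zero, one_smul, rowOffsetCount_one]
  | succ n ih => rw [rowOffsetCount_succ, ih, transfer_smul, transfer_weight, smul_smul, pow_succ]

lemma card_equal_valu_rows {n : ℕ} (hn : 0 < n) :
    Nat.card {M : Matrix (Fin 3) (Fin n) (Fin 3) // ∀ i j, valu (M i) = valu (M j)} =
      3 * 7 ^ (n - 1) := by
  obtain ⟨m, rfl⟩ : ∃ m, n = m + 1 := ⟨n - 1, by omega⟩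
  have hrows : ∀ M : Matrix (Fin 3) (Fin (m + 1)) (Fin 3), (∀ i j, valu (M i) = valu (M j)) ↔
      (valu (M 0) : ℤ) - valu (M 1) = 0 * 2 ^ (m + 1) ∧
        (valu (M 0) : ℤ) - valu (M 2) = 0 * 2 ^ (m + 1) := by
    refine fun M => ⟨fun h => ⟨by simp [h 0 1], by simp [h 0 2]⟩, fun ⟨h₁, h₂⟩ i j => ?_⟩
    fin_cases i <;> fin_cases j <;> simp only [Fin.zero_eta, Fin.mk_one, Fin.reduceFinMk] <;> omega
  rw [Nat.card_eq_fintype_card, Fintype.card_subtype, filter_congr fun M _ => hrows M]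
  change rowOffsetCount (m + 1) 0 0 = _
  rw [rowOffsetCount_succ_eq]
  simp [weight, mul_comm]

end ValuationRows

theorem card_words_mem_and_mem_at {ι α : Type*} [Fintype ι] [DecidableEq ι] {A B : Finset α}
    (hBA : B ⊆ A) (k : ι) :
    Nat.card {w : ι → α // (∀ i, w i ∈ A) ∧ w k ∈ (B : Set α)} =
      #B * #A ^ (Fintype.card ι - 1) := by
  have e : {w : ι → α // (∀ i, w i ∈ A) ∧ w k ∈ (B : Set α)} ≃
      ∀ i, (if i = k then B else A : Finset α) :=
    (Equiv.subtypeEquivRight fun w => ?_).trans Equiv.subtypePiEquivPi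
  · rw [Nat.card_congr e, Nat.card_pi, Fintype.prod_eq_mul_prod_compl k, if_pos rfl,
      prod_congr rfl fun i hi => by rw [if_neg (mem_compl.1 hi ∘ mem_singleton.2)],
      prod_const, card_compl, card_singleton]
    simp
  · refine ⟨fun h i => ?_, fun h => ⟨fun i => ?_, by simpa using h k⟩⟩
    · split_ifs with hik
      · exact hik ▸ h.2
      · exact h.1 i
    · have := h i
      split_ifs at this
      exacts [hBA this, this]

/-- There is a bijection between the set `𝒜₃(n)` of `3 × n` matrices with entries in
`{0,1,2}` all of whose rows have the same valuation, and the set `𝒮(n)` of words of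
length `n` over the alphabet `{1,…,7}` whose last letter lies in `{1,2,3}`. -/
theorem exists_bijection_A3_S (n : ℕ) (hn : 0 < n) :
    ∃ f : {M : Matrix (Fin 3) (Fin n) (Fin 3) // ∀ i j, valu (M i) = valu (M j)} →
        {w : Fin n → ℕ // (∀ i, w i ∈ Finset.Icc 1 7) ∧
          w ⟨n - 1, by omega⟩ ∈ ({1, 2, 3} : Set ℕ)},
      Function.Bijective f := by
  have hwords := card_words_mem_and_mem_at (A := Icc 1 7) (B := {1, 2, 3}) (by decide)
    (⟨n - 1, by omega⟩ : Fin n)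
  rw [coe_insert, coe_insert, coe_singleton, Fintype.card_fin,
    show #({1, 2, 3} : Finset ℕ) = 3 from rfl, show #(Icc 1 7) = 7 from rfl] at hwords
  have := Nat.finite_of_card_ne_zero (by rw [hwords]; positivity)
  obtain ⟨e⟩ := Finite.card_eq.1 ((ValuationRows.card_equal_valu_rows hn).trans hwords.symm)
  exact ⟨e, e.bijective⟩
end

section
/- For every integer n ≥ 2, the set of columns c ∈ {0,1,2}^3 that occur as the first column of some 3×n matrix with entries in {0,1,2} all of whose rows have equal valuation is exactly the 9-element set 𝒞_3 = { (0,0,0), (0,0,2), (0,2,0), (0,2,2), (1,1,1), (2,0,0), (2,0,2), (2,2,0), (2,2,2) } (columns written as triples). -/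
open Finset

lemma valu_mod_two {n : ℕ} (hn : 0 < n) (a : Fin n → Fin 3) :
    valu a % 2 = (a ⟨0, hn⟩ : ℕ) % 2 := by
  set i0 : Fin n := ⟨0, hn⟩ with hi0
  have hd : 2 ∣ ∑ j ∈ univ.erase i0, (a j : ℕ) * 2 ^ (j : ℕ) := by
    refine Finset.dvd_sum fun j hj => ?_
    have hne : (j : ℕ) ≠ 0 := fun h => (Finset.mem_erase.mp hj).1 (Fin.ext h)
    exact Dvd.dvd.mul_left (dvd_pow_self 2 hne) _
  obtain ⟨k, hk⟩ := hd
  have hs : valu a = 2 * k + (a i0 : ℕ) * 2 ^ (i0 : ℕ) := by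
    rw [valu, ← Finset.sum_erase_add univ _ (mem_univ i0), hk]
  have : (i0 : ℕ) = 0 := rfl
  rw [hs, this]
  omega

lemma valu_pair {n : ℕ} (hn : 2 ≤ n) (a b : Fin 3) :
    valu (fun j : Fin n => if (j : ℕ) = 0 then a else if (j : ℕ) = 1 then b else 0) =
      (a : ℕ) + 2 * (b : ℕ) := by
  set i0 : Fin n := ⟨0, by omega⟩ with hi0
  set i1 : Fin n := ⟨1, by omega⟩ with hi1
  have hne : i0 ≠ i1 := by simp [hi0, hi1, Fin.ext_iff]
  rw [valu]
  have h : (∑ j : Fin n, ((if (j : ℕ) = 0 then a else if (j : ℕ) = 1 then b else 0 : Fin 3) : ℕ)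
        * 2 ^ (j : ℕ)) =
      ∑ j ∈ ({i0, i1} : Finset (Fin n)),
        ((if (j : ℕ) = 0 then a else if (j : ℕ) = 1 then b else 0 : Fin 3) : ℕ) * 2 ^ (j : ℕ) := by
    refine (Finset.sum_subset (subset_univ _) ?_).symm
    intro x _ hx
    simp only [Finset.mem_insert, Finset.mem_singleton] at hx
    push_neg at hx
    have h0 : (x : ℕ) ≠ 0 := fun h => hx.1 (Fin.ext h)
    have h1 : (x : ℕ) ≠ 1 := fun h => hx.2 (Fin.ext h)
    simp [h0, h1]
  rw [h, Finset.sum_pair hne]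
  have e0 : (i0 : ℕ) = 0 := rfl
  have e1 : (i1 : ℕ) = 1 := rfl
  rw [e0, e1]
  simp
  ring

/-- For `n ≥ 2`, the columns `c ∈ {0,1,2}³` occurring as the first column of some
`3 × n` matrix with entries in `{0,1,2}` all of whose rows have equal valuation
form exactly the 9-element set `𝒞₃`. -/
theorem first_column_set_eq (n : ℕ) (hn : 2 ≤ n) :
    {c : Fin 3 → Fin 3 | ∃ M : Matrix (Fin 3) (Fin n) (Fin 3),
        (∀ i j, valu (M i) = valu (M j)) ∧ ∀ i, M i ⟨0, by omega⟩ = c i} =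
      ({![0, 0, 0], ![0, 0, 2], ![0, 2, 0], ![0, 2, 2], ![1, 1, 1],
        ![2, 0, 0], ![2, 0, 2], ![2, 2, 0], ![2, 2, 2]} : Set (Fin 3 → Fin 3)) := by
  have hn0 : 0 < n := by omega
  ext c
  simp only [Set.mem_setOf_eq, Set.mem_insert_iff, Set.mem_singleton_iff]
  constructor
  · rintro ⟨M, hval, hcol⟩
    have hp : ∀ i, (c i : ℕ) % 2 = (c 0 : ℕ) % 2 := by
      intro i
      have h1 : valu (M i) % 2 = (c i : ℕ) % 2 := by
        rw [valu_mod_two hn0 (M i), hcol i]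
      have h2 : valu (M 0) % 2 = (c 0 : ℕ) % 2 := by
        rw [valu_mod_two hn0 (M 0), hcol 0]
      rw [← h1, ← h2, hval i 0]
    have hce : c = ![c 0, c 1, c 2] := by
      ext i; fin_cases i <;> rfl
    have key : ∀ a b d : Fin 3, (b : ℕ) % 2 = (a : ℕ) % 2 → (d : ℕ) % 2 = (a : ℕ) % 2 →
        (![a, b, d] = ![0, 0, 0] ∨ ![a, b, d] = ![0, 0, 2] ∨ ![a, b, d] = ![0, 2, 0] ∨
          ![a, b, d] = ![0, 2, 2] ∨ ![a, b, d] = ![1, 1, 1] ∨ ![a, b, d] = ![2, 0, 0] ∨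
          ![a, b, d] = ![2, 0, 2] ∨ ![a, b, d] = ![2, 2, 0] ∨ ![a, b, d] = ![2, 2, 2]) := by
      decide
    rw [hce]
    exact key _ _ _ (hp 1) (hp 2)
  · intro h
    have hc1 : (∀ i, c i = 1) ∨ (∀ i, c i ≠ 1) := by
      rcases h with h | h | h | h | h | h | h | h | h <;> subst h <;>
        first
          | (left; intro i; fin_cases i <;> rfl)
          | (right; intro i; fin_cases i <;> decide)
    classical
    set d : Fin 3 → Fin 3 := fun a => if a = 0 then 2 else if a = 2 then 1 else 0 with hd
    refine ⟨fun i j => if (j : ℕ) = 0 then c i else if (j : ℕ) = 1 then d (c i) else 0, ?_, ?_⟩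
    · intro i j
      have vi : valu (fun k : Fin n =>
          if (k : ℕ) = 0 then c i else if (k : ℕ) = 1 then d (c i) else 0) =
          (c i : ℕ) + 2 * (d (c i) : ℕ) := valu_pair hn _ _
      have vj : valu (fun k : Fin n =>
          if (k : ℕ) = 0 then c j else if (k : ℕ) = 1 then d (c j) else 0) =
          (c j : ℕ) + 2 * (d (c j) : ℕ) := valu_pair hn _ _
      have key2 : ∀ a : Fin 3, a ≠ 1 → (a : ℕ) + 2 * (d a : ℕ) = 4 := by
        simp only [hd]; decide
      show (valu fun k : Fin n =>
          if (k : ℕ) = 0 then c i else if (k : ℕ) = 1 then d (c i) else 0) =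
        valu fun k : Fin n =>
          if (k : ℕ) = 0 then c j else if (k : ℕ) = 1 then d (c j) else 0
      rw [vi, vj]
      rcases hc1 with h1 | h1
      · rw [h1 i, h1 j]
      · rw [key2 _ (h1 i), key2 _ (h1 j)]
    · intro i
      simp
end
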